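/- Suppose there exists an index i such that 2λ_i + j ≠ 0 for every j ∈ {0, 1, …, k−1}. Then the linear map T : ℝ^{{α∈ℕⁿ : |α|=k}} → ℝ^{{β∈ℕⁿ : |β|=k−1}} defined by (T D)_β = Σ_{i=1}^n (β_i + 1)(β_i + 2λ_i) D_{β^i} is surjective; equivalently, the rank of T equals N_{k−1}. -/

import Mathlib

open scoped BigOperators

noncomputable section

/-- For `|β| = k − 1`, the multi-index `β^i` (the `i`-th entry increased by `1`) has
`|β^i| = k`. -/
def upIdx (n k : ℕ) (hk : 1 ≤ k) (β : {β : Fin n → ℕ // ∑ i, β i = k - 1}) (i : Fin n) :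
    {α : Fin n → ℕ // ∑ i, α i = k} :=
  ⟨Function.update β.1 i (β.1 i + 1), by
    have h1 : ∑ j, Function.update β.1 i (β.1 i + 1) j
        = (β.1 i + 1) + ∑ j ∈ Finset.univ.erase i, β.1 j := by
      rw [← Finset.add_sum_erase _ _ (Finset.mem_univ i), Function.update_self]
      congr 1
      exact Finset.sum_congr rfl fun j hj =>
        Function.update_of_ne (Finset.mem_erase.1 hj).1 _ _
    have h2 : β.1 i + ∑ j ∈ Finset.univ.erase i, β.1 j = k - 1 := by
      rw [Finset.add_sum_erase _ _ (Finset.mem_univ i)]; exact β.2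
    omega⟩

/-- The linear map `T : ℝ^{{|α|=k}} → ℝ^{{|β|=k−1}}`,
`(T D)_β = Σᵢ (βᵢ+1)(βᵢ+2λᵢ) D_{βⁱ}`. -/
def Tmap (n k : ℕ) (hk : 1 ≤ k) (lam : Fin n → ℝ) :
    ({α : Fin n → ℕ // ∑ i, α i = k} → ℝ) →ₗ[ℝ]
      ({β : Fin n → ℕ // ∑ i, β i = k - 1} → ℝ) where
  toFun D := fun β => ∑ i, ((β.1 i : ℝ) + 1) * ((β.1 i : ℝ) + 2 * lam i)
    * D (upIdx n k hk β i)
  map_add' D E := by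
    funext β
    simp only [Pi.add_apply, mul_add]
    rw [Finset.sum_add_distrib]
  map_smul' r D := by
    funext β
    simp only [Pi.smul_apply, smul_eq_mul, RingHom.id_apply]
    rw [Finset.mul_sum]
    exact Finset.sum_congr rfl fun i _ => by ring

/-!
Pick `i` with `2λᵢ + j ≠ 0` for `j < k`. In `(T D)_β` the coefficient of `D_{βⁱ}` is
`(βᵢ + 1)(βᵢ + 2λᵢ) ≠ 0`, while every other term `D_{βʲ}`, `j ≠ i`, has `i`-th index `βᵢ`,
one less than that of `βⁱ`. So `T` is triangular with respect to the weight `α ↦ αᵢ`, and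
`T D = E` can be solved for `D` weight by weight.
-/

section Triangular

variable {K A B : Type*} [DivisionRing K]

/-- The `b`-th coordinate of `T D` is `c b * D (s b)` plus a term that only depends on the
values of `D` of weight below `w (s b)`. -/
def IsTriangular (T : (A → K) → (B → K)) (s : B → A) (w : A → ℕ) (c : B → K) : Prop :=
  ∀ (D D' : A → K) (b : B), (∀ a, w a < w (s b) → D a = D' a) →
    T D b - c b * D (s b) = T D' b - c b * D' (s b)

variable {T : (A → K) → (B → K)} {s : B → A} {w : A → ℕ} {c : B → K}

theorem IsTriangular.exists_apply_eq_of_weight_lt (hT : IsTriangular T s w c)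
    (hs : s.Injective) (hc : ∀ b, c b ≠ 0) (E : B → K) (m : ℕ) :
    ∃ D : A → K, ∀ b, w (s b) < m → T D b = E b := by
  induction m with
  | zero => exact ⟨0, fun b hb => absurd hb (Nat.not_lt_zero _)⟩
  | succ m ih =>
    obtain ⟨D, hD⟩ := ih
    -- correct `D` on weight `m` only; lower weights, hence earlier equations, are untouched
    let D' : A → K := fun a =>
      if w a = m then s.extend (fun b => (c b)⁻¹ * (E b - (T D b - c b * D (s b)))) D a
      else D a
    refine ⟨D', fun b hb => ?_⟩
    have key := hT D' D b fun a ha => if_neg (by omega)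
    rcases (Nat.lt_succ_iff.1 hb).lt_or_eq with hlt | heq
    · rw [show D' (s b) = D (s b) from if_neg hlt.ne, sub_left_inj] at key
      rw [key, hD b hlt]
    · have hD' : D' (s b) = (c b)⁻¹ * (E b - (T D b - c b * D (s b))) := by
        simp only [D', if_pos heq, hs.extend_apply]
      rw [hD', mul_inv_cancel_left₀ (hc b), sub_eq_iff_eq_add] at key
      rw [key, add_sub_cancel]

theorem IsTriangular.surjective (hT : IsTriangular T s w c) (hs : s.Injective)
    (hc : ∀ b, c b ≠ 0) (hw : BddAbove (Set.range (w ∘ s))) : T.Surjective := by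
  intro E
  obtain ⟨N, hN⟩ := hw
  obtain ⟨D, hD⟩ := hT.exists_apply_eq_of_weight_lt hs hc E (N + 1)
  exact ⟨D, funext fun b => hD b (Nat.lt_succ_of_le (hN ⟨b, rfl⟩))⟩

end Triangular

section Tmap

variable {n k : ℕ} {hk : 1 ≤ k}

theorem Tmap_apply (lam : Fin n → ℝ) (D : {α : Fin n → ℕ // ∑ i, α i = k} → ℝ)
    (β : {β : Fin n → ℕ // ∑ i, β i = k - 1}) :
    Tmap n k hk lam D β =
      ∑ i, ((β.1 i : ℝ) + 1) * ((β.1 i : ℝ) + 2 * lam i) * D (upIdx n k hk β i) :=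
  rfl

theorem upIdx_apply_self (β : {β : Fin n → ℕ // ∑ i, β i = k - 1}) (i : Fin n) :
    (upIdx n k hk β i).1 i = β.1 i + 1 :=
  Function.update_self _ _ _

theorem upIdx_apply_of_ne (β : {β : Fin n → ℕ // ∑ i, β i = k - 1}) {i j : Fin n}
    (h : j ≠ i) : (upIdx n k hk β j).1 i = β.1 i :=
  Function.update_of_ne h.symm _ _

theorem upIdx_injective (i : Fin n) : Function.Injective (upIdx n k hk · i) := by
  intro β β' h
  have h' := congrArg Subtype.val h
  apply Subtype.ext
  funext j
  by_cases hj : j = i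
  · subst hj
    simpa [upIdx] using congrFun h' j
  · simpa [upIdx, hj] using congrFun h' j

theorem apply_lt_of_sum_eq_sub_one (hk : 1 ≤ k) (β : {β : Fin n → ℕ // ∑ i, β i = k - 1})
    (i : Fin n) : β.1 i < k := by
  have hle := Finset.single_le_sum (fun j _ => Nat.zero_le (β.1 j)) (Finset.mem_univ i)
  have hsum := β.2
  omega

theorem Tmap_isTriangular (lam : Fin n → ℝ) (i : Fin n) :
    IsTriangular (Tmap n k hk lam) (upIdx n k hk · i) (fun α => α.1 i)
      (fun β => ((β.1 i : ℝ) + 1) * ((β.1 i : ℝ) + 2 * lam i)) := by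
  intro D D' β hDD'
  simp only [Tmap_apply, ← Finset.add_sum_erase _ _ (Finset.mem_univ i), add_sub_cancel_left]
  refine Finset.sum_congr rfl fun j hj => congrArg _ (hDD' _ ?_)
  show (upIdx n k hk β j).1 i < (upIdx n k hk β i).1 i
  rw [upIdx_apply_of_ne β (Finset.ne_of_mem_erase hj), upIdx_apply_self]
  exact Nat.lt_succ_self _

end Tmap

theorem Tmap_surjective_general (n k : ℕ) (hk : 1 ≤ k) (lam : Fin n → ℝ)
    (hlam : ∃ i : Fin n, ∀ j : ℕ, j < k → 2 * lam i + (j : ℝ) ≠ 0) :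
    Function.Surjective (Tmap n k hk lam) := by
  obtain ⟨i, hi⟩ := hlam
  refine (Tmap_isTriangular lam i).surjective (upIdx_injective i) (fun β => ?_) ⟨k, ?_⟩
  · have hβ := apply_lt_of_sum_eq_sub_one hk β i
    refine mul_ne_zero (by positivity) fun h => hi _ hβ ?_
    linarith
  · rintro _ ⟨β, rfl⟩
    simpa [upIdx_apply_self] using apply_lt_of_sum_eq_sub_one hk β i

/-- if some `λᵢ` satisfies `2λᵢ + j ≠ 0` for every `j ∈ {0,…,k−1}`,
then `T` is surjective (equivalently, its rank is `N_{k−1}`). -/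
theorem Tmap_surjective (n k : ℕ) (hn : 1 ≤ n) (hk : 1 ≤ k) (lam : Fin n → ℝ)
    (hlam : ∃ i : Fin n, ∀ j : ℕ, j < k → 2 * lam i + (j : ℝ) ≠ 0) :
    Function.Surjective (Tmap n k hk lam) :=
  Tmap_surjective_general n k hk lam hlam
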